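/- arXiv:2311.17679 — 4 statements merged into one kernel-verified Lean document; each statement's English description precedes it below -/
import Mathlib

section
/- Let d_1/e_1 < ⋯ < d_l/e_l be rational slopes with (d_i,e_i) ∈ ℕ × ℕ_{>0}, let 2 ≤ i ≤ l, let RC_{i-1} = C_{i-1} + (λ_i, β_i) be the restricted cone on vectors (d_{i-1},e_{i-1}), (d_i,e_i), and let S ⊂ ℝ be a finite set. Then there exists m_0 ∈ e_1·ℕ_{>0} such that for all a ∈ S and all sufficiently large n, the point (a,0) + n(d_i/e_i, 1) + m_0(d_1/e_1, 1) lies in RC_{i-1}; and there exists m_1 ∈ ℕ_{>0} such that for all a ∈ S and all sufficiently large n, the point (a,0) + n(d_i/e_i, 1) − m_1(1,0) lies in RC_{i-1}. -/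
set_option maxHeartbeats 1000000


/-- with slopes `d_1/e_1 ≤ d_{i-1}/e_{i-1} < d_i/e_i` (cross-multiplied)
and the restricted cone `RC_{i-1} = C_{i-1} + (λ,β)` on the vectors
`(d_{i-1},e_{i-1})`, `(d_i,e_i)`, for any finite `S ⊂ ℝ`:
(1) there is `m0 ∈ e_1·ℕ_{>0}` with `(a,0) + n(d_i/e_i,1) + m0(d_1/e_1,1) ∈ RC_{i-1}`
for all `a ∈ S` and all large `n`; and
(2) there is `m1 ∈ ℕ_{>0}` with `(a,0) + n(d_i/e_i,1) − m1(1,0) ∈ RC_{i-1}`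
for all `a ∈ S` and all large `n`. -/
theorem approx_from_previous_restricted_cone
    (d1 e1 dA eA dB eB : ℕ) (he1 : 0 < e1) (heA : 0 < eA) (heB : 0 < eB)
    (h1A : d1 * eA ≤ dA * e1) (hAB : dA * eB < dB * eA)
    (lam bet : ℚ) (hlam : 0 ≤ lam) (hbet : 0 ≤ bet)
    (S : Finset ℝ) :
    (∃ m0 : ℕ, 0 < m0 ∧ e1 ∣ m0 ∧ ∃ N : ℕ, ∀ n : ℕ, N ≤ n → ∀ a ∈ S,
      ∃ r1 r2 : ℝ, 0 ≤ r1 ∧ 0 ≤ r2 ∧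
        a + (n : ℝ) * ((dB : ℝ) / eB) + (m0 : ℝ) * ((d1 : ℝ) / e1)
          = r1 * dA + r2 * dB + (lam : ℝ) ∧
        (n : ℝ) + (m0 : ℝ) = r1 * eA + r2 * eB + (bet : ℝ)) ∧
    (∃ m1 : ℕ, 0 < m1 ∧ ∃ N : ℕ, ∀ n : ℕ, N ≤ n → ∀ a ∈ S,
      ∃ r1 r2 : ℝ, 0 ≤ r1 ∧ 0 ≤ r2 ∧
        a + (n : ℝ) * ((dB : ℝ) / eB) - (m1 : ℝ)
          = r1 * dA + r2 * dB + (lam : ℝ) ∧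
        (n : ℝ) = r1 * eA + r2 * eB + (bet : ℝ)) := by
  have he1R : (0:ℝ) < (e1:ℝ) := by exact_mod_cast he1
  have heAR : (0:ℝ) < (eA:ℝ) := by exact_mod_cast heA
  have heBR : (0:ℝ) < (eB:ℝ) := by exact_mod_cast heB
  have hABR : (dA:ℝ) * eB < (dB:ℝ) * eA := by exact_mod_cast hAB
  have h1AR : (d1:ℝ) * eA ≤ (dA:ℝ) * e1 := by exact_mod_cast h1A
  have hD : (0:ℝ) < (dB:ℝ)*eA - (dA:ℝ)*eB := by linarith
  have hc : (0:ℝ) < (dB:ℝ)*e1 - (d1:ℝ)*eB := by nlinarith [mul_pos he1R hD]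
  have hlamR : (0:ℝ) ≤ (lam:ℝ) := by exact_mod_cast hlam
  have hbetR : (0:ℝ) ≤ (bet:ℝ) := by exact_mod_cast hbet
  have hdAR : (0:ℝ) ≤ (dA:ℝ) := by positivity
  have hd1R : (0:ℝ) ≤ (d1:ℝ) := by positivity
  -- bound on S
  obtain ⟨B, hB0, hB⟩ : ∃ B:ℝ, 0 ≤ B ∧ ∀ a ∈ S, |a| ≤ B := by
    obtain ⟨B, hB⟩ := (S.image (fun a => |a|)).exists_le
    exact ⟨max B 0, le_max_right _ _,
      fun a ha => le_trans (hB _ (Finset.mem_image_of_mem _ ha)) (le_max_left _ _)⟩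
  constructor
  · -- Part 1
    obtain ⟨K, hK⟩ := exists_nat_ge (((e1:ℝ)*((dB:ℝ)*bet + (eB:ℝ)*B))/((dB:ℝ)*e1 - (d1:ℝ)*eB))
    refine ⟨e1*(K+1), by positivity, ⟨K+1, rfl⟩, ?_⟩
    set m0 : ℕ := e1*(K+1) with hm0def
    have hm0R : ((e1:ℝ)*((dB:ℝ)*bet + (eB:ℝ)*B)) ≤ (m0:ℝ)*((dB:ℝ)*e1 - (d1:ℝ)*eB) := by
      have h1 : (K:ℝ) ≤ (m0:ℝ) := by
        have : (K:ℝ) + 1 ≤ (m0:ℝ) := by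
          have : (e1:ℝ) ≥ 1 := by exact_mod_cast he1
          push_cast [hm0def]; nlinarith
        linarith
      have h2 : ((e1:ℝ)*((dB:ℝ)*bet + (eB:ℝ)*B))/((dB:ℝ)*e1 - (d1:ℝ)*eB) ≤ (m0:ℝ) :=
        le_trans hK h1
      exact (div_le_iff₀ hc).mp h2
    obtain ⟨N, hN⟩ := exists_nat_ge
      ((eB:ℝ)*((e1:ℝ)*eA*lam + (e1:ℝ)*dA*m0 + (e1:ℝ)*eA*B)/(((dB:ℝ)*eA - (dA:ℝ)*eB)*e1))
    refine ⟨N, fun n hn a ha => ?_⟩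
    have hnN : ((eB:ℝ)*((e1:ℝ)*eA*lam + (e1:ℝ)*dA*m0 + (e1:ℝ)*eA*B)) ≤
        (n:ℝ)*(((dB:ℝ)*eA - (dA:ℝ)*eB)*e1) := by
      have h1 : ((eB:ℝ)*((e1:ℝ)*eA*lam + (e1:ℝ)*dA*m0 + (e1:ℝ)*eA*B)/(((dB:ℝ)*eA - (dA:ℝ)*eB)*e1)) ≤ (n:ℝ) :=
        le_trans hN (by exact_mod_cast hn)
      exact (div_le_iff₀ (by positivity)).mp h1
    have haB : -B ≤ a ∧ a ≤ B := abs_le.mp (hB a ha)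
    refine ⟨((m0:ℝ)*((dB:ℝ)*e1 - (d1:ℝ)*eB) + (e1:ℝ)*((eB:ℝ)*lam - (dB:ℝ)*bet - (eB:ℝ)*a)) /
        ((e1:ℝ)*((dB:ℝ)*eA - (dA:ℝ)*eB)),
      ((n:ℝ)*(((dB:ℝ)*eA - (dA:ℝ)*eB))*e1 +
        (eB:ℝ)*((e1:ℝ)*eA*a + (m0:ℝ)*eA*d1 - (e1:ℝ)*eA*lam - (e1:ℝ)*dA*m0 + (e1:ℝ)*dA*bet)) /
        ((e1:ℝ)*eB*((dB:ℝ)*eA - (dA:ℝ)*eB)), ?_, ?_, ?_, ?_⟩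
    · apply div_nonneg _ (by positivity)
      nlinarith [mul_nonneg (mul_nonneg he1R.le heBR.le) hlamR,
        mul_le_mul_of_nonneg_left haB.2 (mul_nonneg he1R.le heBR.le)]
    · apply div_nonneg _ (by positivity)
      nlinarith [mul_nonneg (mul_nonneg (mul_nonneg heBR.le he1R.le) heAR.le)
          (by linarith [haB.1] : (0:ℝ) ≤ B + a),
        mul_nonneg (mul_nonneg (mul_nonneg heBR.le (Nat.cast_nonneg m0)) heAR.le) hd1R,
        mul_nonneg (mul_nonneg (mul_nonneg heBR.le he1R.le) hdAR) hbetR]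
    · set D := (dB:ℝ)*eA - (dA:ℝ)*eB with hDdef
      have hD0 : D ≠ 0 := hD.ne'
      field_simp [he1R.ne', heBR.ne']
      rw [hDdef]
      ring
    · set D := (dB:ℝ)*eA - (dA:ℝ)*eB with hDdef
      have hD0 : D ≠ 0 := hD.ne'
      field_simp [he1R.ne', heBR.ne']
      rw [hDdef]
      ring
  · -- Part 2
    obtain ⟨K, hK⟩ := exists_nat_ge (((dB:ℝ)*bet + (eB:ℝ)*B)/(eB:ℝ))
    refine ⟨K+1, by positivity, ?_⟩
    set m1 : ℕ := K+1 with hm1def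
    have hm1R : ((dB:ℝ)*bet + (eB:ℝ)*B) ≤ (eB:ℝ)*(m1:ℝ) := by
      have h1 : ((dB:ℝ)*bet + (eB:ℝ)*B)/(eB:ℝ) ≤ (m1:ℝ) := by
        refine le_trans hK ?_
        push_cast [hm1def]; linarith
      nlinarith [(div_le_iff₀ heBR).mp h1]
    obtain ⟨N, hN⟩ := exists_nat_ge
      ((eB:ℝ)*((eA:ℝ)*m1 + (eA:ℝ)*lam + (eA:ℝ)*B)/((dB:ℝ)*eA - (dA:ℝ)*eB))
    refine ⟨N, fun n hn a ha => ?_⟩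
    have hnN : ((eB:ℝ)*((eA:ℝ)*m1 + (eA:ℝ)*lam + (eA:ℝ)*B)) ≤
        (n:ℝ)*((dB:ℝ)*eA - (dA:ℝ)*eB) := by
      have h1 : ((eB:ℝ)*((eA:ℝ)*m1 + (eA:ℝ)*lam + (eA:ℝ)*B)/((dB:ℝ)*eA - (dA:ℝ)*eB)) ≤ (n:ℝ) :=
        le_trans hN (by exact_mod_cast hn)
      exact (div_le_iff₀ hD).mp h1
    have haB : -B ≤ a ∧ a ≤ B := abs_le.mp (hB a ha)
    refine ⟨((eB:ℝ)*(m1:ℝ) + (eB:ℝ)*lam - (dB:ℝ)*bet - (eB:ℝ)*a) / ((dB:ℝ)*eA - (dA:ℝ)*eB),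
      ((n:ℝ)*((dB:ℝ)*eA - (dA:ℝ)*eB) + (eB:ℝ)*((eA:ℝ)*a - (eA:ℝ)*m1 - (eA:ℝ)*lam + (dA:ℝ)*bet)) /
        ((eB:ℝ)*((dB:ℝ)*eA - (dA:ℝ)*eB)), ?_, ?_, ?_, ?_⟩
    · apply div_nonneg _ hD.le
      nlinarith [mul_nonneg heBR.le hlamR,
        mul_le_mul_of_nonneg_left haB.2 heBR.le]
    · apply div_nonneg _ (by positivity)
      nlinarith [mul_nonneg (mul_nonneg heBR.le heAR.le) (by linarith [haB.1] : (0:ℝ) ≤ B + a),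
        mul_nonneg (mul_nonneg heBR.le hdAR) hbetR]
    · set D := (dB:ℝ)*eA - (dA:ℝ)*eB with hDdef
      have hD0 : D ≠ 0 := hD.ne'
      field_simp [he1R.ne', heBR.ne']
      rw [hDdef]
      ring
    · set D := (dB:ℝ)*eA - (dA:ℝ)*eB with hDdef
      have hD0 : D ≠ 0 := hD.ne'
      field_simp [he1R.ne', heBR.ne']
      rw [hDdef]
      ring
end

section
/- Let A be a Noetherian ring and {I_n}_{n∈ℕ} a Noetherian filtration of ideals of A (i.e., I_0 = A, I_{n+1} ⊆ I_n, I_n·I_m ⊆ I_{n+m}, and there exists c ≥ 1 with I_n·I_c = I_{n+c} for all n ≥ c). Define H⁰_{{I_n}}(A) = {x ∈ A : I_n·x = 0 for some n ≥ 0}. Then there exists an integer n_1 ≥ 0 such that I_n ∩ H⁰_{{I_n}}(A) = 0 for all n ≥ n_1. -/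
/-!
The torsion `H = ⋃ₘ Ann(Iₘ)` is an increasing union of ideals, so in a Noetherian ring it equals
`Ann(I_{m₀})` for one `m₀`; in particular `I_{m₀} H = 0`. Since `I_c ^ s = I_{cs}`, some power of
`I_c` kills `H`, and the Artin–Rees lemma for `I_c` and `H` then gives `I_c ^ k ∩ H = 0` for some
`k`. Finally `I_n ⊆ I_{c(k+1)} = I_c ^ (k+1) ⊆ I_c ^ k` for `n ≥ c(k+1)`.
-/

open Submodule

theorem pow_succ_eq_apply_mul_of_mul_eq {M : Type*} [Monoid M] {f : ℕ → M} {c : ℕ}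
    (hc : ∀ n, c ≤ n → f n * f c = f (n + c)) (s : ℕ) : f c ^ (s + 1) = f (c * (s + 1)) := by
  induction s with
  | zero => simp
  | succ s ih =>
    rw [pow_succ, ih, hc _ (Nat.le_mul_of_pos_right c s.succ_pos), Nat.mul_succ c (s + 1)]

theorem Ideal.exists_annihilator_le_of_antitone {A : Type*} [CommRing A] [IsNoetherianRing A]
    {I : ℕ → Ideal A} (hI : Antitone I) : ∃ m₀, ∀ m, (I m).annihilator ≤ (I m₀).annihilator := by
  let K : ℕ →o Ideal A := ⟨fun m => (I m).annihilator, fun _ _ h => annihilator_mono (hI h)⟩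
  obtain ⟨m₀, hm₀⟩ := monotone_stabilizes_iff_noetherian.mpr ‹_› K
  exact ⟨m₀, fun m => (K.monotone (le_max_left m m₀)).trans (hm₀ _ (le_max_right m m₀)).ge⟩

theorem Ideal.exists_pow_smul_top_inf_eq_bot {R M : Type*} [CommRing R] [IsNoetherianRing R]
    [AddCommGroup M] [Module R M] [Module.Finite R M] (J : Ideal R) {N : Submodule R M} {s : ℕ}
    (hs : J ^ s • N = ⊥) : ∃ k, J ^ k • ⊤ ⊓ N = ⊥ := by
  obtain ⟨k, hk⟩ := J.exists_pow_inf_eq_pow_smul N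
  refine ⟨k + s, eq_bot_iff.mpr ?_⟩
  rw [hk _ le_self_add, Nat.add_sub_cancel_left, ← hs]
  exact smul_mono_right _ inf_le_right

theorem filtration_eventually_meets_torsion_trivially_general
    (A : Type*) [CommRing A] [IsNoetherianRing A]
    (I : ℕ → Ideal A)
    (hdec : ∀ n, I (n + 1) ≤ I n)
    (hNoeth : ∃ c : ℕ, 1 ≤ c ∧ ∀ n, c ≤ n → I n * I c = I (n + c)) :
    ∃ n1 : ℕ, ∀ n, n1 ≤ n → ∀ x ∈ I n,
      (∃ m : ℕ, ∀ y ∈ I m, y * x = 0) → x = 0 := by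
  obtain ⟨c, hc1, hc⟩ := hNoeth
  have hI : Antitone I := antitone_nat_of_succ_le hdec
  have hpow := pow_succ_eq_apply_mul_of_mul_eq hc
  obtain ⟨m₀, hm₀⟩ := Ideal.exists_annihilator_le_of_antitone hI
  have hkill : I c ^ (m₀ + 1) • (I m₀).annihilator = ⊥ := by
    rw [hpow, smul_eq_mul, eq_bot_iff, ← mul_annihilator (I m₀)]
    exact Ideal.mul_mono_left (hI (by nlinarith))
  obtain ⟨k, hk⟩ := (I c).exists_pow_smul_top_inf_eq_bot hkill
  refine ⟨c * (k + 1), fun n hn x hxn ⟨m, hm⟩ => ?_⟩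
  have hx : x ∈ I c ^ k • ⊤ ⊓ (I m₀).annihilator := by
    refine ⟨?_, hm₀ m (mem_annihilator.mpr fun y hy => by rw [smul_eq_mul, mul_comm]; exact hm y hy)⟩
    rw [smul_eq_mul, Ideal.mul_top]
    exact Ideal.pow_le_pow_right k.le_succ (hpow k ▸ hI hn hxn)
  rwa [hk, mem_bot] at hx

/-- for a Noetherian filtration `{I_n}` of ideals of a Noetherian
commutative ring `A` (`I_0 = A`, `I_{n+1} ⊆ I_n`, `I_n I_m ⊆ I_{n+m}`, and
`I_n I_c = I_{n+c}` for some `c ≥ 1` and all `n ≥ c`), there exists `n_1` such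
that `I_n ∩ H⁰_{{I_n}}(A) = 0` for all `n ≥ n_1`, where
`H⁰_{{I_n}}(A) = {x : I_m x = 0 for some m}`. -/
theorem filtration_eventually_meets_torsion_trivially
    (A : Type*) [CommRing A] [IsNoetherianRing A]
    (I : ℕ → Ideal A)
    (h0 : I 0 = ⊤)
    (hdec : ∀ n, I (n + 1) ≤ I n)
    (hmul : ∀ m n, I m * I n ≤ I (m + n))
    (hNoeth : ∃ c : ℕ, 1 ≤ c ∧ ∀ n, c ≤ n → I n * I c = I (n + c)) :
    ∃ n1 : ℕ, ∀ n, n1 ≤ n → ∀ x ∈ I n,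
      (∃ m : ℕ, ∀ y ∈ I m, y * x = 0) → x = 0 :=
  filtration_eventually_meets_torsion_trivially_general A I hdec hNoeth
end

section
/- Let A = k[X_1,…,X_d] be a polynomial ring in d ≥ 2 variables over a field k and I = (X_1², …, X_d²). Then for every n ≥ 1, dim_k((Iⁿ)_{2n}) = C(n+d−1, d−1) and dim_k((Iⁿ)_{2n+1}) = d · C(n+d−1, d−1). Consequently the density function f_{A,{Iⁿ}}(x) = lim_n dim_k((Iⁿ)_{⌊xn⌋})/(n^{d−1}/d!) equals 0 for x ∈ [0,2), equals d at x = 2, and equals d·x^{d−1} for x > 2; in particular f_{A,{Iⁿ}} is discontinuous at x = 2. -/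
open Filter MvPolynomial

/-- The ideal `I = (X_1², …, X_d²)` of `k[X_1,…,X_d]`. -/
noncomputable def sqIdeal (k : Type*) [Field k] (d : ℕ) :
    Ideal (MvPolynomial (Fin d) k) :=
  Ideal.span (Set.range fun i : Fin d => (X i : MvPolynomial (Fin d) k) ^ 2)

/-- The degree-`m` graded piece of `Iⁿ` for `I = (X_1²,…,X_d²)`. -/
noncomputable def sqPiece (k : Type*) [Field k] (d n m : ℕ) :
    Submodule k (MvPolynomial (Fin d) k) :=
  Submodule.restrictScalars k (sqIdeal k d ^ n) ⊓
    homogeneousSubmodule (Fin d) k m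

namespace SqProof

variable {k : Type*} [Field k] {d : ℕ}

lemma mem_sqIdeal_support (p : MvPolynomial (Fin d) k) (hp : p ∈ sqIdeal k d) :
    ∀ a ∈ p.support, 1 ≤ ∑ i, a i / 2 := by
  classical
  induction hp using Submodule.span_induction with
  | mem q hq =>
    obtain ⟨i, rfl⟩ := hq
    intro a ha
    simp only at ha
    rw [X_pow_eq_monomial, support_monomial] at ha
    simp only [if_neg (one_ne_zero : (1:k) ≠ 0), Finset.mem_singleton] at ha
    subst ha
    have : ∑ j, Finsupp.single i 2 j / 2 = 1 := by
      rw [Finset.sum_eq_single i]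
      · simp
      · intro j _ hj; simp [Finsupp.single_apply, Ne.symm hj]
      · simp
    omega
  | zero => simp
  | add q r _ _ ihq ihr =>
    intro a ha
    rcases Finset.mem_union.mp (MvPolynomial.support_add (p := q) (q := r) ha) with h | h
    · exact ihq a h
    · exact ihr a h
  | smul c q _ ihq =>
    intro a ha
    rw [smul_eq_mul] at ha
    obtain ⟨u, hu, v, hv, rfl⟩ := Finset.mem_add.mp (MvPolynomial.support_mul c q ha)
    have h1 := ihq v hv
    have h2 : ∑ i, v i / 2 ≤ ∑ i, (u + v) i / 2 :=
      Finset.sum_le_sum fun i _ => by simp only [Finsupp.add_apply]; omega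
    omega

lemma mem_sqIdeal_pow_support (n : ℕ) (p : MvPolynomial (Fin d) k)
    (hp : p ∈ sqIdeal k d ^ n) : ∀ a ∈ p.support, n ≤ ∑ i, a i / 2 := by
  classical
  induction n generalizing p with
  | zero => simp
  | succ n ih =>
    rw [pow_succ] at hp
    refine Submodule.mul_induction_on hp ?_ ?_
    · intro q hq r hr a ha
      obtain ⟨u, hu, v, hv, rfl⟩ := Finset.mem_add.mp (MvPolynomial.support_mul q r ha)
      have h1 := ih q hq u hu
      have h2 := mem_sqIdeal_support r hr v hv
      have h3 : ∑ i, u i / 2 + ∑ i, v i / 2 ≤ ∑ i, (u + v) i / 2 := by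
        rw [← Finset.sum_add_distrib]
        exact Finset.sum_le_sum fun i _ => by simp only [Finsupp.add_apply]; omega
      omega
    · intro q r ihq ihr a ha
      rcases Finset.mem_union.mp (MvPolynomial.support_add ha) with h | h
      · exact ihq a h
      · exact ihr a h

lemma exists_sub_sum (c : Fin d → ℕ) (n : ℕ) (h : n ≤ ∑ i, c i) :
    ∃ b : Fin d → ℕ, (∀ i, b i ≤ c i) ∧ ∑ i, b i = n := by
  induction n with
  | zero => exact ⟨0, fun i => Nat.zero_le _, by simp⟩
  | succ n ih =>
    obtain ⟨b, hb, hsum⟩ := ih (by omega)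
    have hex : ∃ j, b j < c j := by
      by_contra hcon
      push_neg at hcon
      have : ∑ i, c i ≤ ∑ i, b i := Finset.sum_le_sum fun i _ => hcon i
      omega
    obtain ⟨j, hj⟩ := hex
    classical
    refine ⟨Function.update b j (b j + 1), fun i => ?_, ?_⟩
    · rcases eq_or_ne i j with rfl | hne
      · rw [Function.update_self]; omega
      · rw [Function.update_of_ne hne]; exact hb i
    · rw [Finset.sum_update_of_mem (Finset.mem_univ j)]
      rw [Finset.sum_eq_sum_sdiff_singleton_add (Finset.mem_univ j) b] at hsum
      omega

lemma prod_pow_mem {R : Type*} [CommSemiring R] (I : Ideal R) {ι : Type*} [DecidableEq ι]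
    (s : Finset ι) (f : ι → R) (hf : ∀ i ∈ s, f i ∈ I) (b : ι → ℕ) :
    (∏ i ∈ s, f i ^ b i) ∈ I ^ (∑ i ∈ s, b i) := by
  induction s using Finset.induction with
  | empty => simp [Ideal.one_eq_top]
  | insert _ _ h ih =>
    rename_i a s
    rw [Finset.prod_insert h, Finset.sum_insert h, pow_add]
    exact Ideal.mul_mem_mul (Ideal.pow_mem_pow (hf a (Finset.mem_insert_self a s)) _)
      (ih fun i hi => hf i (Finset.mem_insert_of_mem hi))

lemma monomial_mem_pow (n : ℕ) (a : Fin d →₀ ℕ) (c : k) (h : n ≤ ∑ i, a i / 2) :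
    monomial a c ∈ sqIdeal k d ^ n := by
  classical
  obtain ⟨b, hb, hsum⟩ := exists_sub_sum (fun i => a i / 2) n h
  set B : Fin d →₀ ℕ := Finsupp.equivFunOnFinite.symm (fun i => 2 * b i) with hB
  have hBapp : ∀ i, B i = 2 * b i := fun i => rfl
  have hBa : ∀ i, B i ≤ a i := fun i => by have := hb i; rw [hBapp]; omega
  have hprod : (∏ i, ((X i : MvPolynomial (Fin d) k) ^ 2) ^ b i) ∈ sqIdeal k d ^ n := by
    rw [← hsum]
    exact prod_pow_mem (sqIdeal k d) Finset.univ
      (fun i => (X i : MvPolynomial (Fin d) k) ^ 2)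
      (fun i _ => Ideal.subset_span ⟨i, rfl⟩) b
  have hmon : (∏ i, ((X i : MvPolynomial (Fin d) k) ^ 2) ^ b i) = monomial B 1 :=
    calc ∏ i, ((X i : MvPolynomial (Fin d) k) ^ 2) ^ b i
        = ∏ i, (X i : MvPolynomial (Fin d) k) ^ B i :=
          Finset.prod_congr rfl fun i _ => by rw [← pow_mul, hBapp]
      _ = ∏ i ∈ B.support, (X i : MvPolynomial (Fin d) k) ^ B i :=
          (Finset.prod_subset (Finset.subset_univ B.support)
            (fun i _ hi => by rw [Finsupp.notMem_support_iff.mp hi, pow_zero])).symm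
      _ = monomial B 1 := prod_X_pow_eq_monomial
  have hab : a - B + B = a := by
    ext i
    rw [Finsupp.add_apply, Finsupp.tsub_apply]
    have := hBa i; omega
  have key : monomial a c = monomial (a - B) c * monomial B 1 := by
    rw [monomial_mul, mul_one, hab]
  rw [key]
  exact Ideal.mul_mem_left _ _ (hmon ▸ hprod)

lemma sqIdeal_pow_eq (n : ℕ) :
    Submodule.restrictScalars k (sqIdeal k d ^ n) =
      AddMonoidAlgebra.supported k k {a : Fin d →₀ ℕ | n ≤ ∑ i, a i / 2} := by
  ext p
  rw [Submodule.restrictScalars_mem, AddMonoidAlgebra.mem_supported]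
  constructor
  · intro hp a ha
    exact mem_sqIdeal_pow_support n p hp a ha
  · intro hp
    rw [as_sum p]
    exact Submodule.sum_mem _ fun a ha => monomial_mem_pow n a _ (hp ha)

lemma supported_inter (s t : Set (Fin d →₀ ℕ)) :
    (AddMonoidAlgebra.supported k k s ⊓ AddMonoidAlgebra.supported k k t : Submodule k (MvPolynomial (Fin d) k))
      = AddMonoidAlgebra.supported k k (s ∩ t) := by
  ext p
  simp only [Submodule.mem_inf, AddMonoidAlgebra.mem_supported, Set.subset_inter_iff]

lemma degree_eq_sum (a : Fin d →₀ ℕ) : a.degree = ∑ i, a i := by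
  rw [Finsupp.degree]
  exact Finset.sum_subset (Finset.subset_univ _)
    (fun i _ hi => Finsupp.notMem_support_iff.mp hi)

lemma sqPiece_eq (n m : ℕ) :
    sqPiece k d n m = AddMonoidAlgebra.supported k k
      ({a : Fin d →₀ ℕ | n ≤ ∑ i, a i / 2} ∩ {a : Fin d →₀ ℕ | ∑ i, a i = m}) := by
  rw [sqPiece, sqIdeal_pow_eq, homogeneousSubmodule_eq_finsupp_supported]
  have : {a : Fin d →₀ ℕ | a.degree = m} = {a : Fin d →₀ ℕ | ∑ i, a i = m} := by
    ext a; simp [degree_eq_sum]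
  rw [this]
  exact supported_inter _ _

lemma finrank_supported (s : Set (Fin d →₀ ℕ)) (hs : s.Finite) :
    Module.finrank k ↥(AddMonoidAlgebra.supported k k s) = Nat.card s := by
  classical
  haveI := hs.fintype
  rw [(AddMonoidAlgebra.supportedEquivFinsupp s).finrank_eq, Module.finrank_finsupp_self,
    Nat.card_eq_fintype_card]

lemma finrank_supported' (s : Set (Fin d →₀ ℕ)) (hs : s.Finite) :
    Module.finrank k
      ↥((AddMonoidAlgebra.supported k k s : Submodule k (MvPolynomial (Fin d) k))) = Nat.card s :=
  finrank_supported s hs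

lemma finite_deg (m : ℕ) : ({a : Fin d →₀ ℕ | ∑ i, a i = m}).Finite := by
  classical
  apply Set.Finite.subset (Finset.finite_toSet
    (Finset.finsuppAntidiag (Finset.univ : Finset (Fin d)) m))
  intro a ha
  simp only [Finset.coe_sort_coe, Finset.mem_coe, Finset.mem_finsuppAntidiag]
  exact ⟨ha, (Finset.subset_univ _)⟩

lemma card_sum_eq (hd : 1 ≤ d) (n : ℕ) :
    Nat.card {b : Fin d →₀ ℕ // ∑ i, b i = n} = (n + d - 1).choose (d - 1) := by
  classical
  have e : {b : Fin d →₀ ℕ // ∑ i, b i = n} ≃ Sym (Fin d) n := by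
    refine ⟨fun b => ⟨Finsupp.toMultiset b.1, ?_⟩, fun s => ⟨Multiset.toFinsupp s.1, ?_⟩, ?_, ?_⟩
    · rw [Finsupp.card_toMultiset, Finsupp.sum_fintype _ _ (fun i => rfl)]
      exact b.2
    · rcases s with ⟨s, hs⟩
      have := Multiset.toFinsupp_sum_eq s
      rw [Finsupp.sum_fintype _ _ (fun i => rfl)] at this
      simpa [this] using hs
    · intro b; apply Subtype.ext; simp
    · intro s; apply Subtype.ext; simp [Sym.coe_mk]
  rw [Nat.card_congr e, Nat.card_eq_fintype_card, Sym.card_sym_eq_choose, Fintype.card_fin]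
  have h1 : d + n - 1 = n + d - 1 := by omega
  rw [h1, ← Nat.choose_symm (by omega : n ≤ n + d - 1)]
  congr 1
  omega

lemma sum_div_two_le (a : Fin d →₀ ℕ) : 2 * (∑ i, a i / 2) ≤ ∑ i, a i := by
  rw [Finset.mul_sum]
  exact Finset.sum_le_sum fun i _ => by omega

lemma card_even (n : ℕ) :
    Nat.card ({a : Fin d →₀ ℕ | n ≤ ∑ i, a i / 2} ∩ {a : Fin d →₀ ℕ | ∑ i, a i = 2 * n} : Set _)
      = Nat.card {b : Fin d →₀ ℕ // ∑ i, b i = n} := by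
  classical
  refine Nat.card_congr ⟨fun a => ⟨Finsupp.mapRange (· / 2) (by norm_num) a.1, ?_⟩,
    fun b => ⟨Finsupp.mapRange (2 * ·) (by norm_num) b.1, ?_, ?_⟩, ?_, ?_⟩
  · obtain ⟨a, h1, h2⟩ := a
    simp only [Set.mem_setOf_eq] at h1 h2
    have := sum_div_two_le a
    simp only [Finsupp.mapRange_apply]
    omega
  · obtain ⟨b, hb⟩ := b
    simp only [Set.mem_setOf_eq, Finsupp.mapRange_apply]
    have : ∑ i, 2 * b i / 2 = ∑ i, b i := Finset.sum_congr rfl fun i _ => by omega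
    rw [this, hb]
  · obtain ⟨b, hb⟩ := b
    simp only [Set.mem_setOf_eq, Finsupp.mapRange_apply, ← Finset.mul_sum]
    rw [hb]
  · rintro ⟨a, h1, h2⟩
    simp only [Set.mem_setOf_eq] at h1 h2
    have heven : ∀ i, 2 * (a i / 2) = a i := by
      have hle : ∀ i ∈ Finset.univ, 2 * (a i / 2) ≤ a i := fun i _ => by omega
      have hsum : ∑ i, 2 * (a i / 2) = ∑ i, a i := by
        have h3 := sum_div_two_le a
        rw [← Finset.mul_sum] at *
        omega
      have := (Finset.sum_eq_sum_iff_of_le hle).mp hsum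
      intro i
      exact this i (Finset.mem_univ i)
    apply Subtype.ext
    ext i
    simp only [Finsupp.mapRange_apply]
    exact heven i
  · rintro ⟨b, hb⟩
    apply Subtype.ext
    ext i
    simp only [Finsupp.mapRange_apply]
    omega

lemma card_odd (n : ℕ) :
    Nat.card ({a : Fin d →₀ ℕ | n ≤ ∑ i, a i / 2} ∩
        {a : Fin d →₀ ℕ | ∑ i, a i = 2 * n + 1} : Set _)
      = d * Nat.card {b : Fin d →₀ ℕ // ∑ i, b i = n} := by
  classical
  have hsingle : ∀ (j : Fin d), ∑ i, (Finsupp.single j 1 : Fin d →₀ ℕ) i = 1 := by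
    intro j
    rw [Finset.sum_eq_single j (fun i _ hi => by
      rw [Finsupp.single_apply, if_neg (Ne.symm hi)]) (fun h => absurd (Finset.mem_univ j) h)]
    simp
  set f : Fin d × {b : Fin d →₀ ℕ // ∑ i, b i = n} →
      ({a : Fin d →₀ ℕ | n ≤ ∑ i, a i / 2} ∩ {a : Fin d →₀ ℕ | ∑ i, a i = 2 * n + 1} : Set _) :=
    fun p => ⟨Finsupp.mapRange (2 * ·) (by norm_num) p.2.1 + Finsupp.single p.1 1, by
      obtain ⟨j, b, hb⟩ := p
      constructor
      · simp only [Set.mem_setOf_eq, Finsupp.add_apply, Finsupp.mapRange_apply]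
        calc n = ∑ i, b i := hb.symm
          _ ≤ ∑ i, (2 * b i + (Finsupp.single j 1 : Fin d →₀ ℕ) i) / 2 :=
            Finset.sum_le_sum fun i _ => by omega
      · simp only [Set.mem_setOf_eq, Finsupp.add_apply, Finsupp.mapRange_apply,
          Finset.sum_add_distrib, hsingle j, ← Finset.mul_sum, hb]⟩ with hf
  have happ : ∀ (j : Fin d) (b : {b : Fin d →₀ ℕ // ∑ i, b i = n}) (i : Fin d),
      ((f (j, b) : Fin d →₀ ℕ)) i = 2 * b.1 i + (Finsupp.single j 1 : Fin d →₀ ℕ) i := by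
    intro j b i
    simp [hf, Finsupp.add_apply, Finsupp.mapRange_apply]
  have hbij : Function.Bijective f := by
    constructor
    · rintro ⟨j, b⟩ ⟨j', b'⟩ heq
      have h : ∀ i, 2 * b.1 i + (Finsupp.single j 1 : Fin d →₀ ℕ) i
          = 2 * b'.1 i + (Finsupp.single j' 1 : Fin d →₀ ℕ) i := by
        intro i
        rw [← happ j b i, ← happ j' b' i, heq]
      have hjj : j = j' := by
        by_contra hne
        have := h j
        rw [Finsupp.single_apply, if_pos rfl, Finsupp.single_apply, if_neg (Ne.symm hne)] at this
        omega
      subst hjj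
      have hbb : b = b' := by
        apply Subtype.ext
        ext i
        have := h i
        omega
      rw [hbb]
    · rintro ⟨a, h1, h2⟩
      simp only [Set.mem_setOf_eq] at h1 h2
      have hs2 := sum_div_two_le a
      have hmod : ∑ i, a i % 2 = 1 := by
        have hsplit : ∑ i, a i = ∑ i, 2 * (a i / 2) + ∑ i, a i % 2 := by
          rw [← Finset.sum_add_distrib]
          exact Finset.sum_congr rfl fun i _ => by omega
        rw [← Finset.mul_sum] at hsplit
        omega
      obtain ⟨j, _, hj⟩ := Finset.exists_ne_zero_of_sum_ne_zero (by omega : ∑ i, a i % 2 ≠ 0)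
      have hothers : ∀ i, i ≠ j → a i % 2 = 0 := by
        have hrest : ∑ i ∈ Finset.univ \ {j}, a i % 2 = 0 := by
          rw [Finset.sum_eq_sum_sdiff_singleton_add (Finset.mem_univ j) (fun i => a i % 2)]
            at hmod
          omega
        intro i hi
        exact (Finset.sum_eq_zero_iff).mp hrest i (by simp [hi])
      have hjodd : a j % 2 = 1 := by omega
      have hbsum : ∑ i, (Finsupp.mapRange (· / 2) (by norm_num) a) i = n := by
        simp only [Finsupp.mapRange_apply]
        omega
      refine ⟨(j, ⟨Finsupp.mapRange (· / 2) (by norm_num) a, hbsum⟩), ?_⟩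
      apply Subtype.ext
      ext i
      rw [happ]
      simp only [Finsupp.mapRange_apply, Finsupp.single_apply]
      rcases eq_or_ne j i with rfl | hne
      · rw [if_pos rfl]; omega
      · rw [if_neg hne]
        have := hothers i (Ne.symm hne)
        omega
  rw [← Nat.card_congr (Equiv.ofBijective f hbij), Nat.card_prod,
    Nat.card_eq_fintype_card, Fintype.card_fin]

lemma inter_eq_empty {n m : ℕ} (h : m < 2 * n) :
    ({a : Fin d →₀ ℕ | n ≤ ∑ i, a i / 2} ∩ {a : Fin d →₀ ℕ | ∑ i, a i = m} : Set _) = ∅ := by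
  ext a
  simp only [Set.mem_inter_iff, Set.mem_setOf_eq, Set.mem_empty_iff_false, iff_false, not_and]
  intro h1 h2
  have := sum_div_two_le a
  omega

lemma inter_eq_full {n m : ℕ} (h : 2 * n + d ≤ m) :
    ({a : Fin d →₀ ℕ | n ≤ ∑ i, a i / 2} ∩ {a : Fin d →₀ ℕ | ∑ i, a i = m} : Set _)
      = {a : Fin d →₀ ℕ | ∑ i, a i = m} := by
  ext a
  simp only [Set.mem_inter_iff, Set.mem_setOf_eq, and_iff_right_iff_imp]
  intro h2
  have hle : ∑ i, a i ≤ ∑ i, (2 * (a i / 2) + 1) :=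
    Finset.sum_le_sum fun i _ => by omega
  rw [Finset.sum_add_distrib, Finset.sum_const, Finset.card_univ, Fintype.card_fin,
    ← Finset.mul_sum, smul_eq_mul, mul_one] at hle
  omega

lemma card_set_sum (hd : 1 ≤ d) (m : ℕ) :
    Nat.card ({a : Fin d →₀ ℕ | ∑ i, a i = m} : Set _) = (m + d - 1).choose (d - 1) := by
  rw [← card_sum_eq hd m]
  exact Nat.card_congr (Equiv.subtypeEquivRight fun b => Iff.rfl)

lemma finrank_piece_even (hd : 1 ≤ d) (n : ℕ) :
    Module.finrank k ↥(sqPiece k d n (2 * n)) = (n + d - 1).choose (d - 1) := by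
  rw [sqPiece_eq]
  have h := finrank_supported (k := k)
    ({a : Fin d →₀ ℕ | n ≤ ∑ i, a i / 2} ∩ {a : Fin d →₀ ℕ | ∑ i, a i = 2 * n})
    ((finite_deg (2 * n)).inter_of_right _)
  rw [card_even, card_sum_eq hd] at h
  exact h

lemma finrank_piece_odd (hd : 1 ≤ d) (n : ℕ) :
    Module.finrank k ↥(sqPiece k d n (2 * n + 1)) = d * (n + d - 1).choose (d - 1) := by
  rw [sqPiece_eq]
  have h := finrank_supported (k := k)
    ({a : Fin d →₀ ℕ | n ≤ ∑ i, a i / 2} ∩ {a : Fin d →₀ ℕ | ∑ i, a i = 2 * n + 1})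
    ((finite_deg (2 * n + 1)).inter_of_right _)
  rw [card_odd, card_sum_eq hd] at h
  exact h

lemma finrank_piece_zero {n m : ℕ} (h : m < 2 * n) :
    Module.finrank k ↥(sqPiece k d n m) = 0 := by
  rw [sqPiece_eq, inter_eq_empty h]
  have h0 := finrank_supported (k := k) (∅ : Set (Fin d →₀ ℕ)) Set.finite_empty
  rw [show Nat.card (∅ : Set (Fin d →₀ ℕ)) = 0 by simp] at h0
  exact h0

lemma finrank_piece_full (hd : 1 ≤ d) {n m : ℕ} (h : 2 * n + d ≤ m) :
    Module.finrank k ↥(sqPiece k d n m) = (m + d - 1).choose (d - 1) := by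
  rw [sqPiece_eq, inter_eq_full h]
  have h0 := finrank_supported (k := k) ({a : Fin d →₀ ℕ | ∑ i, a i = m}) (finite_deg m)
  rw [card_set_sum hd] at h0
  exact h0

lemma ascFactorial_eq_prod (n j : ℕ) :
    n.ascFactorial j = ∏ i ∈ Finset.range j, (n + i) := by
  induction j with
  | zero => simp [Nat.ascFactorial_zero]
  | succ j ih => rw [Nat.ascFactorial_succ, Finset.prod_range_succ, ih, mul_comm]

lemma choose_prod (m e : ℕ) :
    e.factorial * (m + e).choose e = ∏ i ∈ Finset.range e, (m + 1 + i) := by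
  rw [← Nat.ascFactorial_eq_factorial_mul_choose, ascFactorial_eq_prod]

lemma tendsto_choose_div (d : ℕ) (hd : 1 ≤ d) (a : ℕ → ℕ) (y : ℝ)
    (ha : Filter.Tendsto (fun n : ℕ => (a n : ℝ) / n) atTop (nhds y)) :
    Filter.Tendsto (fun n : ℕ => ((a n + d - 1).choose (d - 1) : ℝ) /
      ((n : ℝ) ^ (d - 1) / (Nat.factorial d : ℝ))) atTop
      (nhds ((d : ℝ) * y ^ (d - 1))) := by
  set e := d - 1 with he
  have hde : d = e + 1 := by omega
  have hfac : (d.factorial : ℝ) = d * e.factorial := by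
    rw [hde]; push_cast [Nat.factorial_succ]; ring
  have hmain : Filter.Tendsto
      (fun n : ℕ => (d : ℝ) * ∏ i ∈ Finset.range e, ((a n : ℝ) + 1 + i) / n)
      atTop (nhds ((d : ℝ) * y ^ e)) := by
    have hprod : Filter.Tendsto
        (fun n : ℕ => ∏ i ∈ Finset.range e, ((a n : ℝ) + 1 + i) / n)
        atTop (nhds (∏ _i ∈ Finset.range e, y)) := by
      apply tendsto_finset_prod
      intro i _
      have h0 : Filter.Tendsto (fun n : ℕ => ((1 : ℝ) + i) / n) atTop (nhds 0) :=
        tendsto_const_div_atTop_nhds_zero_nat _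
      have := ha.add h0
      rw [add_zero] at this
      refine this.congr fun n => ?_
      rw [← add_div]
      ring_nf
    rw [Finset.prod_const, Finset.card_range] at hprod
    exact hprod.const_mul _
  refine hmain.congr' ?_
  filter_upwards [eventually_ge_atTop 1] with n hn
  have hn0 : (n : ℝ) ≠ 0 := by positivity
  have hkey : (e.factorial : ℝ) * ((a n + e).choose e : ℝ)
      = ∏ i ∈ Finset.range e, ((a n : ℝ) + 1 + i) := by
    have h2 : ((e.factorial * (a n + e).choose e : ℕ) : ℝ)
        = ((∏ i ∈ Finset.range e, (a n + 1 + i) : ℕ) : ℝ) := by rw [choose_prod (a n) e]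
    push_cast at h2
    exact_mod_cast h2
  have hidx : a n + d - 1 = a n + e := by omega
  rw [hidx]
  rw [Finset.prod_div_distrib, Finset.prod_const, Finset.card_range, ← hkey]
  have hfe : (e.factorial : ℝ) ≠ 0 := by positivity
  have hne : ((n : ℝ) ^ e) ≠ 0 := pow_ne_zero _ hn0
  field_simp [hfac]
  rw [hfac]; ring

end SqProof

open SqProof in
/-- for `A = k[X_1,…,X_d]` (`d ≥ 2`) and `I = (X_1²,…,X_d²)`:
`dim_k (Iⁿ)_{2n} = C(n+d−1, d−1)` and `dim_k (Iⁿ)_{2n+1} = d·C(n+d−1, d−1)`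
for all `n ≥ 1`; consequently the density function
`f(x) = lim_n dim_k((Iⁿ)_{⌊xn⌋})/(n^{d−1}/d!)` equals `0` on `[0,2)`, equals
`d` at `x = 2`, and equals `d·x^{d−1}` for `x > 2`. -/
theorem density_function_of_squares_ideal
    (k : Type*) [Field k] (d : ℕ) (hd : 2 ≤ d) :
    (∀ n : ℕ, 1 ≤ n →
      Module.finrank k ↥(sqPiece k d n (2 * n)) = Nat.choose (n + d - 1) (d - 1)) ∧
    (∀ n : ℕ, 1 ≤ n →
      Module.finrank k ↥(sqPiece k d n (2 * n + 1)) =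
        d * Nat.choose (n + d - 1) (d - 1)) ∧
    (∀ x : ℝ, 0 ≤ x → x < 2 →
      Filter.Tendsto (fun n : ℕ =>
        (Module.finrank k ↥(sqPiece k d n (⌊x * n⌋).toNat) : ℝ) /
          ((n : ℝ) ^ (d - 1) / (Nat.factorial d : ℝ))) Filter.atTop (nhds 0)) ∧
    (Filter.Tendsto (fun n : ℕ =>
        (Module.finrank k ↥(sqPiece k d n (2 * n)) : ℝ) /
          ((n : ℝ) ^ (d - 1) / (Nat.factorial d : ℝ))) Filter.atTop (nhds (d : ℝ))) ∧
    (∀ x : ℝ, 2 < x →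
      Filter.Tendsto (fun n : ℕ =>
        (Module.finrank k ↥(sqPiece k d n (⌊x * n⌋).toNat) : ℝ) /
          ((n : ℝ) ^ (d - 1) / (Nat.factorial d : ℝ))) Filter.atTop
        (nhds ((d : ℝ) * x ^ (d - 1)))) := by
  have hd1 : 1 ≤ d := by omega
  refine ⟨fun n _ => finrank_piece_even hd1 n, fun n _ => finrank_piece_odd hd1 n, ?_, ?_, ?_⟩
  · -- x < 2
    intro x hx0 hx2
    have heq : (fun _ : ℕ => (0 : ℝ)) =ᶠ[atTop] fun n : ℕ =>
        (Module.finrank k ↥(sqPiece k d n (⌊x * n⌋).toNat) : ℝ) /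
          ((n : ℝ) ^ (d - 1) / (Nat.factorial d : ℝ)) := by
      filter_upwards [eventually_ge_atTop 1] with n hn
      have hnpos : (0:ℝ) < n := by exact_mod_cast hn
      have hlt : (⌊x * n⌋).toNat < 2 * n := by
        have h1 : (⌊x * n⌋ : ℝ) ≤ x * n := Int.floor_le _
        have h2 : x * n < 2 * n := by nlinarith
        have h3 : ⌊x * n⌋ < ((2 * n : ℕ) : ℤ) := by
          have : (⌊x * n⌋ : ℝ) < ((2 * n : ℕ) : ℝ) := by push_cast; linarith
          exact_mod_cast this
        omega
      rw [finrank_piece_zero hlt]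
      simp
    exact Filter.Tendsto.congr' heq tendsto_const_nhds
  · -- x = 2
    have hone : Filter.Tendsto (fun n : ℕ => ((n : ℕ) : ℝ) / n) atTop (nhds 1) := by
      refine Filter.Tendsto.congr' ?_
        (tendsto_const_nhds : Filter.Tendsto (fun _ : ℕ => (1:ℝ)) atTop (nhds 1))
      filter_upwards [eventually_ge_atTop 1] with n hn
      have hn0 : (n : ℝ) ≠ 0 := by positivity
      rw [div_self hn0]
    have := tendsto_choose_div d hd1 (fun n => n) 1 hone
    rw [one_pow, mul_one] at this
    refine this.congr fun n => ?_
    rw [finrank_piece_even hd1 n]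
  · -- x > 2
    intro x hx
    have hx0 : (0:ℝ) < x - 2 := by linarith
    have ha : Filter.Tendsto (fun n : ℕ => (((⌊x * n⌋).toNat : ℕ) : ℝ) / n) atTop (nhds x) := by
      have hlow : Filter.Tendsto (fun n : ℕ => x - 1 / (n:ℝ)) atTop (nhds x) := by
        have := (tendsto_const_nhds : Filter.Tendsto (fun _ : ℕ => x) atTop (nhds x)).sub
          (tendsto_const_div_atTop_nhds_zero_nat 1)
        rwa [sub_zero] at this
      refine tendsto_of_tendsto_of_tendsto_of_le_of_le' hlow tendsto_const_nhds ?_ ?_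
      · filter_upwards [eventually_ge_atTop 1] with n hn
        have hnpos : (0:ℝ) < n := by exact_mod_cast hn
        have hnn : (0:ℝ) ≤ x * n := by nlinarith
        have hcast : (((⌊x * n⌋).toNat : ℕ) : ℝ) = (⌊x * n⌋ : ℝ) := by
          exact_mod_cast congrArg (fun z : ℤ => (z : ℝ))
            (Int.toNat_of_nonneg (Int.floor_nonneg.2 hnn))
        have hfl : x * n - 1 < (⌊x * n⌋ : ℝ) := Int.sub_one_lt_floor _
        show x - 1 / (n:ℝ) ≤ _
        rw [hcast, le_div_iff₀ hnpos]
        have hexp : (x - 1 / (n:ℝ)) * n = x * n - 1 := by field_simp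
        linarith
      · filter_upwards [eventually_ge_atTop 1] with n hn
        have hnpos : (0:ℝ) < n := by exact_mod_cast hn
        have hnn : (0:ℝ) ≤ x * n := by nlinarith
        have hcast : (((⌊x * n⌋).toNat : ℕ) : ℝ) = (⌊x * n⌋ : ℝ) := by
          exact_mod_cast congrArg (fun z : ℤ => (z : ℝ))
            (Int.toNat_of_nonneg (Int.floor_nonneg.2 hnn))
        show (_:ℝ) ≤ x
        rw [hcast, div_le_iff₀ hnpos]
        exact le_trans (Int.floor_le _) (by nlinarith)
    have hlarge : ∀ᶠ n : ℕ in atTop, 2 * n + d ≤ (⌊x * n⌋).toNat := by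
      have ht : Filter.Tendsto (fun n : ℕ => (x - 2) * n) atTop atTop :=
        Filter.Tendsto.const_mul_atTop hx0 tendsto_natCast_atTop_atTop
      filter_upwards [ht.eventually_ge_atTop ((d:ℝ) + 1), eventually_ge_atTop 1] with n h1 hn
      have hnpos : (0:ℝ) < n := by exact_mod_cast hn
      have hfl : x * n - 1 < (⌊x * n⌋ : ℝ) := Int.sub_one_lt_floor _
      have h3 : ((2 * n + d : ℕ) : ℝ) < (⌊x * n⌋ : ℝ) := by push_cast; nlinarith
      have h4 : ((2 * n + d : ℕ) : ℤ) < ⌊x * n⌋ := by exact_mod_cast h3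
      omega
    refine Filter.Tendsto.congr' ?_ (tendsto_choose_div d hd1 (fun n => (⌊x * n⌋).toNat) x ha)
    filter_upwards [hlarge] with n hn
    rw [finrank_piece_full hd1 hn]
end

section
/- Let A = k[X,Y,Z] and I = (X²Y³, X³Y², XY²Z⁴, XY³Z³). Then I = (X) ∩ (Y²) ∩ (X², Z³) ∩ (X³, Y³, Z⁴), and the saturation Ĩ of I with respect to 𝔪 = (X,Y,Z) satisfies Ĩⁿ = (X²Y², XY²Z³)ⁿ = saturation of Iⁿ for all n ≥ 1. -/
open MvPolynomial

/-- The saturation `J : M^∞ = ⋃_i (J : M^i)` of an ideal `J` with respect to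
an ideal `M`. -/
noncomputable def satIdeal {A : Type*} [CommRing A] (M J : Ideal A) : Ideal A :=
  ⨆ i : ℕ, Submodule.colon J ((M ^ i : Ideal A) : Set A)

namespace SatAux

open Pointwise Finsupp

abbrev V3 := Fin 3 →₀ ℕ

noncomputable def vc (a b c : ℕ) : V3 :=
  Finsupp.single 0 a + Finsupp.single 1 b + Finsupp.single 2 c

@[simp] lemma vc_apply0 (a b c : ℕ) : vc a b c 0 = a := by simp [vc, Finsupp.single_apply]
@[simp] lemma vc_apply1 (a b c : ℕ) : vc a b c 1 = b := by simp [vc, Finsupp.single_apply]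
@[simp] lemma vc_apply2 (a b c : ℕ) : vc a b c 2 = c := by simp [vc, Finsupp.single_apply]

lemma vc_congr {a b c a' b' c' : ℕ} (h1 : a = a') (h2 : b = b') (h3 : c = c') :
    vc a b c = vc a' b' c' := by subst h1; subst h2; subst h3; rfl

lemma vc_add (a b c a' b' c' : ℕ) : vc a b c + vc a' b' c' = vc (a+a') (b+b') (c+c') := by
  ext i; fin_cases i <;> simp [Finsupp.add_apply]

lemma eq_vc (s : V3) : s = vc (s 0) (s 1) (s 2) := by
  ext i; fin_cases i <;> simp

lemma le3 {a b c : ℕ} {s : V3} : vc a b c ≤ s ↔ a ≤ s 0 ∧ b ≤ s 1 ∧ c ≤ s 2 := by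
  rw [Finsupp.le_def]
  constructor
  · intro h; exact ⟨by simpa using h 0, by simpa using h 1, by simpa using h 2⟩
  · rintro ⟨h1, h2, h3⟩ i; fin_cases i <;> simpa

@[simp] lemma vc_zero : vc 0 0 0 = 0 := by ext i; fin_cases i <;> simp

noncomputable def SI : Set V3 := {vc 2 3 0, vc 3 2 0, vc 1 2 4, vc 1 3 3}
noncomputable def TT : Set V3 := {vc 2 2 0, vc 1 2 3}
noncomputable def EE : Set V3 := {vc 1 0 0, vc 0 1 0, vc 0 0 1}

lemma zero_set_eq : ((0 : Set V3)) = {0} := rfl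

lemma mem_nsmul_TT (n : ℕ) (s : V3) :
    s ∈ n • TT ↔ ∃ j, j ≤ n ∧ s = vc (n + j) (2*n) (3*(n-j)) := by
  induction n generalizing s with
  | zero =>
      rw [zero_nsmul, zero_set_eq]
      simp only [Set.mem_singleton_iff]
      constructor
      · rintro rfl; exact ⟨0, le_rfl, by simp⟩
      · rintro ⟨j, hj, rfl⟩; interval_cases j; simp
  | succ n ih =>
      rw [succ_nsmul, Set.mem_add]
      constructor
      · rintro ⟨u, hu, t, ht, rfl⟩
        rw [ih] at hu
        obtain ⟨j, hj, rfl⟩ := hu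
        rcases ht with rfl | rfl
        · exact ⟨j + 1, by omega, by rw [vc_add]; exact vc_congr (by omega) (by omega) (by omega)⟩
        · exact ⟨j, by omega, by rw [vc_add]; exact vc_congr (by omega) (by omega) (by omega)⟩
      · rintro ⟨j, hj, rfl⟩
        rcases Nat.eq_zero_or_pos j with rfl | hjpos
        · refine ⟨vc (n + 0) (2*n) (3*(n-0)), (ih _).2 ⟨0, by omega, rfl⟩, vc 1 2 3,
            by simp [TT], ?_⟩
          rw [vc_add]; exact vc_congr (by omega) (by omega) (by omega)
        · refine ⟨vc (n + (j-1)) (2*n) (3*(n-(j-1))), (ih _).2 ⟨j-1, by omega, rfl⟩, vc 2 2 0,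
            by simp [TT], ?_⟩
          rw [vc_add]; exact vc_congr (by omega) (by omega) (by omega)

lemma mem_nsmul_SI (n : ℕ) (s : V3) :
    s ∈ n • SI ↔ ∃ a b c e, a + b + c + e = n ∧
      s = vc (2*a+3*b+c+e) (3*a+2*b+2*c+3*e) (4*c+3*e) := by
  induction n generalizing s with
  | zero =>
      rw [zero_nsmul, zero_set_eq]
      simp only [Set.mem_singleton_iff]
      constructor
      · rintro rfl; exact ⟨0, 0, 0, 0, by omega, by simp⟩
      · rintro ⟨a, b, c, e, h, rfl⟩
        have : a = 0 ∧ b = 0 ∧ c = 0 ∧ e = 0 := by omega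
        obtain ⟨rfl, rfl, rfl, rfl⟩ := this
        simp
  | succ n ih =>
      rw [succ_nsmul, Set.mem_add]
      constructor
      · rintro ⟨u, hu, t, ht, rfl⟩
        rw [ih] at hu
        obtain ⟨a, b, c, e, hn, rfl⟩ := hu
        rcases ht with rfl | rfl | rfl | rfl
        · exact ⟨a+1, b, c, e, by omega, by rw [vc_add]; exact vc_congr (by omega) (by omega) (by omega)⟩
        · exact ⟨a, b+1, c, e, by omega, by rw [vc_add]; exact vc_congr (by omega) (by omega) (by omega)⟩
        · exact ⟨a, b, c+1, e, by omega, by rw [vc_add]; exact vc_congr (by omega) (by omega) (by omega)⟩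
        · exact ⟨a, b, c, e+1, by omega, by rw [vc_add]; exact vc_congr (by omega) (by omega) (by omega)⟩
      · rintro ⟨a, b, c, e, hn, rfl⟩
        rcases Nat.eq_zero_or_pos a with rfl | ha
        · rcases Nat.eq_zero_or_pos b with rfl | hb
          · rcases Nat.eq_zero_or_pos c with rfl | hc
            · refine ⟨vc (2*0+3*0+0+(e-1)) (3*0+2*0+2*0+3*(e-1)) (4*0+3*(e-1)),
                (ih _).2 ⟨0, 0, 0, e-1, by omega, rfl⟩, vc 1 3 3, by simp [SI], ?_⟩
              rw [vc_add]; exact vc_congr (by omega) (by omega) (by omega)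
            · refine ⟨vc (2*0+3*0+(c-1)+e) (3*0+2*0+2*(c-1)+3*e) (4*(c-1)+3*e),
                (ih _).2 ⟨0, 0, c-1, e, by omega, rfl⟩, vc 1 2 4, by simp [SI], ?_⟩
              rw [vc_add]; exact vc_congr (by omega) (by omega) (by omega)
          · refine ⟨vc (2*0+3*(b-1)+c+e) (3*0+2*(b-1)+2*c+3*e) (4*c+3*e),
              (ih _).2 ⟨0, b-1, c, e, by omega, rfl⟩, vc 3 2 0, by simp [SI], ?_⟩
            rw [vc_add]; exact vc_congr (by omega) (by omega) (by omega)
        · refine ⟨vc (2*(a-1)+3*b+c+e) (3*(a-1)+2*b+2*c+3*e) (4*c+3*e),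
            (ih _).2 ⟨a-1, b, c, e, by omega, rfl⟩, vc 2 3 0, by simp [SI], ?_⟩
          rw [vc_add]; exact vc_congr (by omega) (by omega) (by omega)

lemma mem_nsmul_EE (n : ℕ) (s : V3) :
    s ∈ n • EE ↔ s 0 + s 1 + s 2 = n := by
  induction n generalizing s with
  | zero =>
      rw [zero_nsmul, zero_set_eq]
      simp only [Set.mem_singleton_iff]
      constructor
      · rintro rfl; simp
      · intro h
        rw [eq_vc s]
        rw [show s 0 = 0 by omega, show s 1 = 0 by omega, show s 2 = 0 by omega, vc_zero]
  | succ n ih =>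
      rw [succ_nsmul, Set.mem_add]
      constructor
      · rintro ⟨u, hu, t, ht, rfl⟩
        rw [ih] at hu
        rcases ht with rfl | rfl | rfl <;> simp [Finsupp.add_apply] <;> omega
      · intro h
        rcases Nat.eq_zero_or_pos (s 0) with h0 | h0
        · rcases Nat.eq_zero_or_pos (s 1) with h1 | h1
          · refine ⟨vc (s 0) (s 1) (s 2 - 1), (ih _).2 (by simp; omega), vc 0 0 1,
              by simp [EE], ?_⟩
            rw [vc_add]; ext i; fin_cases i <;> simp <;> omega
          · refine ⟨vc (s 0) (s 1 - 1) (s 2), (ih _).2 (by simp; omega), vc 0 1 0,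
              by simp [EE], ?_⟩
            rw [vc_add]; ext i; fin_cases i <;> simp <;> omega
        · refine ⟨vc (s 0 - 1) (s 1) (s 2), (ih _).2 (by simp; omega), vc 1 0 0,
            by simp [EE], ?_⟩
          rw [vc_add]; ext i; fin_cases i <;> simp <;> omega

variable {k : Type*} [Field k]

lemma monSpan_mul (S T : Set V3) :
    Ideal.span ((fun s => monomial s (1:k)) '' S) * Ideal.span ((fun s => monomial s (1:k)) '' T)
      = Ideal.span ((fun s => monomial s (1:k)) '' (S + T)) := by
  rw [Ideal.span_mul_span']
  congr 1
  ext p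
  constructor
  · rintro ⟨_, ⟨a, ha, rfl⟩, _, ⟨b, hb, rfl⟩, rfl⟩
    exact ⟨a + b, ⟨a, ha, b, hb, rfl⟩, by simp [monomial_mul]⟩
  · rintro ⟨_, ⟨a, ha, b, hb, rfl⟩, rfl⟩
    exact ⟨_, ⟨a, ha, rfl⟩, _, ⟨b, hb, rfl⟩, by simp [monomial_mul]⟩

lemma monSpan_pow (S : Set V3) (n : ℕ) :
    (Ideal.span ((fun s => monomial s (1:k)) '' S)) ^ n
      = Ideal.span ((fun s => monomial s (1:k)) '' (n • S)) := by
  induction n with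
  | zero =>
      rw [pow_zero, zero_nsmul, zero_set_eq]
      simp [Ideal.one_eq_top, Set.image_singleton, monomial_zero', Ideal.span_singleton_one]
  | succ m ih =>
      rw [pow_succ, ih, monSpan_mul, succ_nsmul]

lemma genX (a b c : ℕ) :
    (X 0 : MvPolynomial (Fin 3) k) ^ a * X 1 ^ b * X 2 ^ c = monomial (vc a b c) 1 := by
  rw [X_pow_eq_monomial, X_pow_eq_monomial, X_pow_eq_monomial, monomial_mul, monomial_mul,
    one_mul, one_mul]
  rfl

lemma spanI_eq :
    (Ideal.span {X 0 ^ 2 * X 1 ^ 3, X 0 ^ 3 * X 1 ^ 2,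
        X 0 * X 1 ^ 2 * X 2 ^ 4, X 0 * X 1 ^ 3 * X 2 ^ 3} : Ideal (MvPolynomial (Fin 3) k))
      = Ideal.span ((fun s => monomial s (1:k)) '' SI) := by
  rw [show (X 0 ^ 2 * X 1 ^ 3 : MvPolynomial (Fin 3) k) = monomial (vc 2 3 0) 1 by
      rw [← genX]; ring,
    show (X 0 ^ 3 * X 1 ^ 2 : MvPolynomial (Fin 3) k) = monomial (vc 3 2 0) 1 by
      rw [← genX]; ring,
    show (X 0 * X 1 ^ 2 * X 2 ^ 4 : MvPolynomial (Fin 3) k) = monomial (vc 1 2 4) 1 by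
      rw [← genX]; ring,
    show (X 0 * X 1 ^ 3 * X 2 ^ 3 : MvPolynomial (Fin 3) k) = monomial (vc 1 3 3) 1 by
      rw [← genX]; ring]
  rw [SI, Set.image_insert_eq, Set.image_insert_eq, Set.image_insert_eq, Set.image_singleton]

lemma spanT_eq :
    (Ideal.span {X 0 ^ 2 * X 1 ^ 2, X 0 * X 1 ^ 2 * X 2 ^ 3} : Ideal (MvPolynomial (Fin 3) k))
      = Ideal.span ((fun s => monomial s (1:k)) '' TT) := by
  rw [show (X 0 ^ 2 * X 1 ^ 2 : MvPolynomial (Fin 3) k) = monomial (vc 2 2 0) 1 by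
      rw [← genX]; ring,
    show (X 0 * X 1 ^ 2 * X 2 ^ 3 : MvPolynomial (Fin 3) k) = monomial (vc 1 2 3) 1 by
      rw [← genX]; ring]
  rw [TT, Set.image_insert_eq, Set.image_singleton]

lemma spanM_eq :
    (Ideal.span {X 0, X 1, X 2} : Ideal (MvPolynomial (Fin 3) k))
      = Ideal.span ((fun s => monomial s (1:k)) '' EE) := by
  rw [show (X 0 : MvPolynomial (Fin 3) k) = monomial (vc 1 0 0) 1 by rw [← genX]; ring,
    show (X 1 : MvPolynomial (Fin 3) k) = monomial (vc 0 1 0) 1 by rw [← genX]; ring,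
    show (X 2 : MvPolynomial (Fin 3) k) = monomial (vc 0 0 1) 1 by rw [← genX]; ring]
  rw [EE, Set.image_insert_eq, Set.image_insert_eq, Set.image_singleton]

lemma condSI (d : V3) : (∃ s ∈ SI, s ≤ d) ↔
    (1 ≤ d 0 ∧ 2 ≤ d 1 ∧ (2 ≤ d 0 ∨ 3 ≤ d 2) ∧ (3 ≤ d 0 ∨ 3 ≤ d 1 ∨ 4 ≤ d 2)) := by
  constructor
  · rintro ⟨s, hs, hle⟩
    simp only [SI, Set.mem_insert_iff, Set.mem_singleton_iff] at hs
    rcases hs with rfl | rfl | rfl | rfl <;> rw [le3] at hle <;> omega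
  · intro h
    by_cases c1 : 3 ≤ d 0
    · exact ⟨vc 3 2 0, by simp [SI], by rw [le3]; omega⟩
    by_cases c2 : 4 ≤ d 2
    · exact ⟨vc 1 2 4, by simp [SI], by rw [le3]; omega⟩
    by_cases c3 : 2 ≤ d 0
    · exact ⟨vc 2 3 0, by simp [SI], by rw [le3]; omega⟩
    · exact ⟨vc 1 3 3, by simp [SI], by rw [le3]; omega⟩

lemma condX (d : V3) : (∃ s ∈ ({vc 1 0 0} : Set V3), s ≤ d) ↔ 1 ≤ d 0 := by
  constructor
  · rintro ⟨s, hs, hle⟩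
    rw [Set.mem_singleton_iff] at hs; subst hs; rw [le3] at hle; omega
  · intro h; exact ⟨vc 1 0 0, rfl, by rw [le3]; omega⟩

lemma condY (d : V3) : (∃ s ∈ ({vc 0 2 0} : Set V3), s ≤ d) ↔ 2 ≤ d 1 := by
  constructor
  · rintro ⟨s, hs, hle⟩
    rw [Set.mem_singleton_iff] at hs; subst hs; rw [le3] at hle; omega
  · intro h; exact ⟨vc 0 2 0, rfl, by rw [le3]; omega⟩

lemma condXZ (d : V3) : (∃ s ∈ ({vc 2 0 0, vc 0 0 3} : Set V3), s ≤ d) ↔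
    (2 ≤ d 0 ∨ 3 ≤ d 2) := by
  constructor
  · rintro ⟨s, hs, hle⟩
    simp only [Set.mem_insert_iff, Set.mem_singleton_iff] at hs
    rcases hs with rfl | rfl <;> rw [le3] at hle <;> omega
  · rintro (h | h)
    · exact ⟨vc 2 0 0, by simp, by rw [le3]; omega⟩
    · exact ⟨vc 0 0 3, by simp, by rw [le3]; omega⟩

lemma condF (d : V3) : (∃ s ∈ ({vc 3 0 0, vc 0 3 0, vc 0 0 4} : Set V3), s ≤ d) ↔
    (3 ≤ d 0 ∨ 3 ≤ d 1 ∨ 4 ≤ d 2) := by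
  constructor
  · rintro ⟨s, hs, hle⟩
    simp only [Set.mem_insert_iff, Set.mem_singleton_iff] at hs
    rcases hs with rfl | rfl | rfl <;> rw [le3] at hle <;> omega
  · rintro (h | h | h)
    · exact ⟨vc 3 0 0, by simp, by rw [le3]; omega⟩
    · exact ⟨vc 0 3 0, by simp, by rw [le3]; omega⟩
    · exact ⟨vc 0 0 4, by simp, by rw [le3]; omega⟩

end SatAux

open SatAux Pointwise

/-- in `A = k[X,Y,Z]` with `I = (X²Y³, X³Y², XY²Z⁴, XY³Z³)`, one
has the primary decomposition `I = (X) ∩ (Y²) ∩ (X²,Z³) ∩ (X³,Y³,Z⁴)`, and the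
saturated powers with respect to `𝔪 = (X,Y,Z)` satisfy
`Ĩⁿ = (X²Y², XY²Z³)ⁿ` for all `n ≥ 1` (in particular `Ĩ = (X²Y², XY²Z³)`). -/
theorem saturated_powers_of_monomial_example
    (k : Type*) [Field k] :
    (Ideal.span {X 0 ^ 2 * X 1 ^ 3, X 0 ^ 3 * X 1 ^ 2,
        X 0 * X 1 ^ 2 * X 2 ^ 4, X 0 * X 1 ^ 3 * X 2 ^ 3}
      : Ideal (MvPolynomial (Fin 3) k)) =
        Ideal.span {X 0} ⊓ Ideal.span {X 1 ^ 2} ⊓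
          Ideal.span {X 0 ^ 2, X 2 ^ 3} ⊓
          Ideal.span {X 0 ^ 3, X 1 ^ 3, X 2 ^ 4} ∧
    ∀ n : ℕ, 1 ≤ n →
      satIdeal (Ideal.span {X 0, X 1, X 2})
        ((Ideal.span {X 0 ^ 2 * X 1 ^ 3, X 0 ^ 3 * X 1 ^ 2,
            X 0 * X 1 ^ 2 * X 2 ^ 4, X 0 * X 1 ^ 3 * X 2 ^ 3}
          : Ideal (MvPolynomial (Fin 3) k)) ^ n) =
      (Ideal.span {X 0 ^ 2 * X 1 ^ 2, X 0 * X 1 ^ 2 * X 2 ^ 3}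
        : Ideal (MvPolynomial (Fin 3) k)) ^ n := by
  have spanX_eq : (Ideal.span {X 0} : Ideal (MvPolynomial (Fin 3) k))
      = Ideal.span ((fun s => monomial s (1:k)) '' {vc 1 0 0}) := by
    rw [show (X 0 : MvPolynomial (Fin 3) k) = monomial (vc 1 0 0) 1 by rw [← genX]; ring,
      Set.image_singleton]
  have spanY_eq : (Ideal.span {X 1 ^ 2} : Ideal (MvPolynomial (Fin 3) k))
      = Ideal.span ((fun s => monomial s (1:k)) '' {vc 0 2 0}) := by
    rw [show (X 1 ^ 2 : MvPolynomial (Fin 3) k) = monomial (vc 0 2 0) 1 by rw [← genX]; ring,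
      Set.image_singleton]
  have spanXZ_eq : (Ideal.span {X 0 ^ 2, X 2 ^ 3} : Ideal (MvPolynomial (Fin 3) k))
      = Ideal.span ((fun s => monomial s (1:k)) '' {vc 2 0 0, vc 0 0 3}) := by
    rw [show (X 0 ^ 2 : MvPolynomial (Fin 3) k) = monomial (vc 2 0 0) 1 by rw [← genX]; ring,
      show (X 2 ^ 3 : MvPolynomial (Fin 3) k) = monomial (vc 0 0 3) 1 by rw [← genX]; ring,
      Set.image_insert_eq, Set.image_singleton]
  have spanF_eq : (Ideal.span {X 0 ^ 3, X 1 ^ 3, X 2 ^ 4} : Ideal (MvPolynomial (Fin 3) k))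
      = Ideal.span ((fun s => monomial s (1:k)) '' {vc 3 0 0, vc 0 3 0, vc 0 0 4}) := by
    rw [show (X 0 ^ 3 : MvPolynomial (Fin 3) k) = monomial (vc 3 0 0) 1 by rw [← genX]; ring,
      show (X 1 ^ 3 : MvPolynomial (Fin 3) k) = monomial (vc 0 3 0) 1 by rw [← genX]; ring,
      show (X 2 ^ 4 : MvPolynomial (Fin 3) k) = monomial (vc 0 0 4) 1 by rw [← genX]; ring,
      Set.image_insert_eq, Set.image_insert_eq, Set.image_singleton]
  constructor
  · -- primary decomposition
    rw [spanI_eq, spanX_eq, spanY_eq, spanXZ_eq, spanF_eq]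
    ext p
    simp only [Submodule.mem_inf, mem_ideal_span_monomial_image]
    constructor
    · intro h
      refine ⟨⟨⟨fun d hd => (condX d).2 ?_, fun d hd => (condY d).2 ?_⟩,
        fun d hd => (condXZ d).2 ?_⟩, fun d hd => (condF d).2 ?_⟩ <;>
      · have := (condSI d).1 (h d hd)
        omega
    · rintro ⟨⟨⟨h1, h2⟩, h3⟩, h4⟩ d hd
      have a1 := (condX d).1 (h1 d hd)
      have a2 := (condY d).1 (h2 d hd)
      have a3 := (condXZ d).1 (h3 d hd)
      have a4 := (condF d).1 (h4 d hd)
      exact (condSI d).2 (by omega)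
  · -- saturated powers
    intro n hn
    rw [spanI_eq, spanT_eq, monSpan_pow, monSpan_pow, satIdeal]
    have hdir : Monotone fun i : ℕ =>
        Submodule.colon (Ideal.span ((fun s => monomial s (1:k)) '' (n • SI)))
          (((Ideal.span {X 0, X 1, X 2} : Ideal (MvPolynomial (Fin 3) k)) ^ i :
            Ideal (MvPolynomial (Fin 3) k)) : Set (MvPolynomial (Fin 3) k)) := by
      intro i j hij
      exact Submodule.colon_mono le_rfl (Ideal.pow_le_pow_right hij)
    apply le_antisymm
    · intro x hx
      rw [Submodule.mem_iSup_of_directed _ hdir.directed_le] at hx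
      obtain ⟨i, hx⟩ := hx
      rw [Submodule.mem_colon] at hx
      have hX0 : (X 0 : MvPolynomial (Fin 3) k) ^ i ∈
          (Ideal.span {X 0, X 1, X 2} : Ideal (MvPolynomial (Fin 3) k)) ^ i :=
        Ideal.pow_mem_pow (Ideal.subset_span (by simp)) i
      have hX1 : (X 1 : MvPolynomial (Fin 3) k) ^ i ∈
          (Ideal.span {X 0, X 1, X 2} : Ideal (MvPolynomial (Fin 3) k)) ^ i :=
        Ideal.pow_mem_pow (Ideal.subset_span (by simp)) i
      have hA := hx _ hX0
      have hB := hx _ hX1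
      rw [smul_eq_mul, mem_ideal_span_monomial_image] at hA hB
      rw [mem_ideal_span_monomial_image]
      intro d hd
      have hdA : d + Finsupp.single 0 i ∈ (x * X 0 ^ i).support := by
        rw [mem_support_iff, X_pow_eq_monomial, coeff_mul_monomial, mul_one]
        rwa [mem_support_iff] at hd
      have hdB : d + Finsupp.single 1 i ∈ (x * X 1 ^ i).support := by
        rw [mem_support_iff, X_pow_eq_monomial, coeff_mul_monomial, mul_one]
        rwa [mem_support_iff] at hd
      obtain ⟨s, hs, hle⟩ := hA _ hdA
      obtain ⟨s', hs', hle'⟩ := hB _ hdB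
      rw [mem_nsmul_SI] at hs hs'
      obtain ⟨a, b, c, e, habce, rfl⟩ := hs
      obtain ⟨a', b', c', e', habce', rfl⟩ := hs'
      rw [le3] at hle hle'
      have k0 : (d + Finsupp.single (0 : Fin 3) i) 0 = d 0 + i := by
        simp [Finsupp.add_apply, Finsupp.single_apply]
      have k1 : (d + Finsupp.single (0 : Fin 3) i) 1 = d 1 := by
        simp [Finsupp.add_apply, Finsupp.single_apply]
      have k2 : (d + Finsupp.single (0 : Fin 3) i) 2 = d 2 := by
        simp [Finsupp.add_apply, Finsupp.single_apply]
      have k0' : (d + Finsupp.single (1 : Fin 3) i) 0 = d 0 := by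
        simp [Finsupp.add_apply, Finsupp.single_apply]
      have k1' : (d + Finsupp.single (1 : Fin 3) i) 1 = d 1 + i := by
        simp [Finsupp.add_apply, Finsupp.single_apply]
      have k2' : (d + Finsupp.single (1 : Fin 3) i) 2 = d 2 := by
        simp [Finsupp.add_apply, Finsupp.single_apply]
      rw [k0, k1, k2] at hle
      rw [k0', k1', k2'] at hle'
      refine ⟨vc (n + min (a'+b') n) (2*n) (3*(n - min (a'+b') n)),
        (mem_nsmul_TT n _).2 ⟨min (a'+b') n, min_le_right _ _, rfl⟩, ?_⟩
      rw [le3]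
      omega
    · rw [Ideal.span_le]
      rintro _ ⟨s, hs, rfl⟩
      have key : (monomial s (1:k) : MvPolynomial (Fin 3) k) ∈
          Submodule.colon (Ideal.span ((fun s => monomial s (1:k)) '' (n • SI)))
            (((Ideal.span {X 0, X 1, X 2} : Ideal (MvPolynomial (Fin 3) k)) ^ (7*n) :
              Ideal (MvPolynomial (Fin 3) k)) : Set (MvPolynomial (Fin 3) k)) := by
        classical
        rw [Submodule.mem_colon]
        intro p hp
        rw [SetLike.mem_coe, spanM_eq, monSpan_pow, mem_ideal_span_monomial_image] at hp
        rw [smul_eq_mul, mem_ideal_span_monomial_image]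
        intro m hm
        have hsub := MvPolynomial.support_mul (monomial s (1:k)) p
        have hm' := hsub hm
        rw [support_monomial, if_neg (one_ne_zero' k)] at hm'
        rw [Finset.mem_add] at hm'
        obtain ⟨y, hy, v, hv, rfl⟩ := hm'
        rw [Finset.mem_singleton] at hy
        subst hy
        obtain ⟨u, hu, huv⟩ := hp v hv
        rw [mem_nsmul_EE] at hu
        rw [Finsupp.le_def] at huv
        have hv0 := huv 0
        have hv1 := huv 1
        have hv2 := huv 2
        have hvdeg : 7 * n ≤ v 0 + v 1 + v 2 := by omega
        rw [mem_nsmul_TT] at hs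
        obtain ⟨j, hj, rfl⟩ := hs
        by_cases hY : n ≤ v 1
        · refine ⟨vc (2*j+3*0+0+(n-j)) (3*j+2*0+2*0+3*(n-j)) (4*0+3*(n-j)),
            (mem_nsmul_SI n _).2 ⟨j, 0, 0, n-j, by omega, rfl⟩, ?_⟩
          rw [le3]
          simp only [Finsupp.add_apply, vc_apply0, vc_apply1, vc_apply2]
          omega
        · by_cases hX : 2*n ≤ v 0
          · refine ⟨vc (2*0+3*n+0+0) (3*0+2*n+2*0+3*0) (4*0+3*0),
              (mem_nsmul_SI n _).2 ⟨0, n, 0, 0, by omega, rfl⟩, ?_⟩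
            rw [le3]
            simp only [Finsupp.add_apply, vc_apply0, vc_apply1, vc_apply2]
            omega
          · refine ⟨vc (2*0+3*0+n+0) (3*0+2*0+2*n+3*0) (4*n+3*0),
              (mem_nsmul_SI n _).2 ⟨0, 0, n, 0, by omega, rfl⟩, ?_⟩
            rw [le3]
            simp only [Finsupp.add_apply, vc_apply0, vc_apply1, vc_apply2]
            omega
      exact le_iSup (fun i => Submodule.colon
        (Ideal.span ((fun s => monomial s (1:k)) '' (n • SI)))
        (((Ideal.span {X 0, X 1, X 2} : Ideal (MvPolynomial (Fin 3) k)) ^ i :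
          Ideal (MvPolynomial (Fin 3) k)) : Set (MvPolynomial (Fin 3) k))) (7*n) key
end
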